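/- For all vectors a, b in R^n (or 2x2 matrices with the Frobenius norm) and any real p ≥ 2, the subdifferential-type inequality (1/p)|b|^p ≥ (1/p)|a|^p + |a|^{p-2} a·(b−a) + (1/2)|a|^{p-2} |b−a|^2 holds. -/
import Mathlib


open Real
open scoped RealInnerProductSpace

lemma key_aux (p A B : ℝ) (hp : 2 ≤ p) (hA : 0 < A) (hB : 0 ≤ B) :
    (1 / p) * B ^ p ≥ (1 / p) * A ^ p - (1 / 2) * A ^ p + (1 / 2) * A ^ (p - 2) * B ^ (2 : ℕ) := by
  have hp0 : (0 : ℝ) < p := by linarith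
  have ht : (0 : ℝ) ≤ B / A := div_nonneg hB hA.le
  have hs : (-1 : ℝ) ≤ (B / A) ^ (2 : ℕ) - 1 := by nlinarith [sq_nonneg (B / A)]
  have hp2 : (1 : ℝ) ≤ p / 2 := by linarith
  have h := one_add_mul_self_le_rpow_one_add hs hp2
  have hrw : (1 + ((B / A) ^ (2 : ℕ) - 1)) ^ (p / 2) = (B / A) ^ p := by
    rw [show (1 + ((B / A) ^ (2 : ℕ) - 1)) = (B / A) ^ (2 : ℕ) by ring,
      ← Real.rpow_natCast (B / A) 2, ← Real.rpow_mul ht]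
    congr 1
    ring
  rw [hrw, div_rpow hB hA.le] at h
  -- h : 1 + p / 2 * ((B / A) ^ 2 - 1) ≤ B ^ p / A ^ p
  have hAp : (0 : ℝ) < A ^ p := rpow_pos_of_pos hA p
  have h2 : (1 + p / 2 * ((B / A) ^ (2 : ℕ) - 1)) * A ^ p ≤ B ^ p := by
    calc (1 + p / 2 * ((B / A) ^ (2 : ℕ) - 1)) * A ^ p ≤ (B ^ p / A ^ p) * A ^ p := by
          exact mul_le_mul_of_nonneg_right h hAp.le
      _ = B ^ p := by field_simp
  have hdiv : (B / A) ^ (2 : ℕ) * A ^ p = B ^ (2 : ℕ) * A ^ (p - 2) := by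
    rw [div_pow, Real.rpow_sub hA, show ((2:ℝ)) = ((2:ℕ):ℝ) by norm_num, Real.rpow_natCast]
    field_simp
    try ring
  have h3 : A ^ p + p / 2 * (B ^ (2 : ℕ) * A ^ (p - 2) - A ^ p) ≤ B ^ p := by
    calc A ^ p + p / 2 * (B ^ (2 : ℕ) * A ^ (p - 2) - A ^ p)
        = (1 + p / 2 * ((B / A) ^ (2 : ℕ) - 1)) * A ^ p := by rw [← hdiv]; ring
      _ ≤ B ^ p := h2
  calc (1 / p) * A ^ p - (1 / 2) * A ^ p + (1 / 2) * A ^ (p - 2) * B ^ (2 : ℕ)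
      = (1 / p) * (A ^ p + p / 2 * (B ^ (2 : ℕ) * A ^ (p - 2) - A ^ p)) := by
        field_simp; ring
    _ ≤ (1 / p) * B ^ p := mul_le_mul_of_nonneg_left h3 (by positivity)

/-- Subdifferential-type inequality for the `p`-power of the Euclidean norm:
`(1/p)|b|^p ≥ (1/p)|a|^p + |a|^{p-2} a·(b−a) + (1/2)|a|^{p-2}|b−a|^2` for `p ≥ 2`. -/
theorem stmt_0 (n : ℕ) (p : ℝ) (hp : 2 ≤ p) (a b : EuclideanSpace ℝ (Fin n)) :
    (1 / p) * ‖b‖ ^ p ≥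
      (1 / p) * ‖a‖ ^ p + ‖a‖ ^ (p - 2) * ⟪a, b - a⟫
        + (1 / 2) * ‖a‖ ^ (p - 2) * ‖b - a‖ ^ (2 : ℕ) := by
  rcases eq_or_ne a 0 with rfl | ha
  · simp only [inner_zero_left, norm_zero, sub_zero, mul_zero, add_zero]
    rw [Real.zero_rpow (by positivity : p ≠ 0)]
    rcases eq_or_lt_of_le hp with hp2 | hp2
    · rw [← hp2]
      norm_num
    · rw [Real.zero_rpow (by linarith : p - 2 ≠ 0)]
      have : (0:ℝ) ≤ (1 / p) * ‖b‖ ^ p := by positivity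
      linarith
  · have hA : 0 < ‖a‖ := norm_pos_iff.mpr ha
    have key := key_aux p ‖a‖ ‖b‖ hp hA (norm_nonneg b)
    have h1 : ⟪a, b - a⟫ = ⟪a, b⟫ - ‖a‖ ^ (2:ℕ) := by
      rw [inner_sub_right, real_inner_self_eq_norm_sq]
    have h2 : ‖b - a‖ ^ (2:ℕ) = ‖b‖ ^ (2:ℕ) - 2 * ⟪a, b⟫ + ‖a‖ ^ (2:ℕ) := by
      rw [norm_sub_sq_real, real_inner_comm]
    have h3 : ‖a‖ ^ (p - 2) * ‖a‖ ^ (2:ℕ) = ‖a‖ ^ p := by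
      rw [← Real.rpow_natCast ‖a‖ 2, ← Real.rpow_add hA]
      norm_num
    rw [h1, h2]
    nlinarith [key, h3]
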